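/- Let φ ∈ L∞(ℝ, X) and f ∈ L¹(ℝ, ℂ), and let U be the interior of the set {λ ∈ ℝ : f̂(λ) = 1}. Then sp(φ − φ * f) ⊆ sp(φ) \ U. -/

import Mathlib

open MeasureTheory Filter Topology

noncomputable section

variable {X : Type*} [NormedAddCommGroup X] [NormedSpace ℂ X] [CompleteSpace X]

def scConv (f : ℝ → ℂ) (φ : ℝ → X) (t : ℝ) : X := ∫ s, f s • φ (t - s)

def FT (f : ℝ → ℂ) (ω : ℝ) : ℂ := ∫ t : ℝ, f t * Complex.exp (-(Complex.I * ω * t))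

def EssBdd (φ : ℝ → X) : Prop :=
  AEStronglyMeasurable φ (volume : Measure ℝ) ∧ ∃ C : ℝ, ∀ᵐ t : ℝ, ‖φ t‖ ≤ C

/-- The Beurling spectrum. -/
def BSpec (φ : ℝ → X) : Set ℝ :=
  {ω | ∀ f : ℝ → ℂ, Integrable f → (∀ᵐ t : ℝ, scConv f φ t = 0) → FT f ω = 0}

/-!
If `g ⋆ φ = 0`, associativity and commutativity of convolution give
`g ⋆ (φ - f ⋆ φ) = g ⋆ φ - f ⋆ (g ⋆ φ) = 0`, so `sp (φ - f ⋆ φ) ⊆ sp φ`.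
If `ω` lies in the interior `U` of `{f̂ = 1}`, take a Schwartz `g` with `ĝ ω = 1` and
`supp ĝ ⊆ U`. Then `f ⋆ g` and `g` are continuous with the same transform, so `f ⋆ g = g` by
Fourier inversion, and `g ⋆ (φ - f ⋆ φ) = g ⋆ φ - (f ⋆ g) ⋆ φ = 0` although `ĝ ω ≠ 0`.
-/

open scoped Convolution FourierTransform Real SchwartzMap
open ContinuousLinearMap

section AeBounded

variable {𝕜 G E E' F : Type*} [NontriviallyNormedField 𝕜]
  [NormedAddCommGroup E] [NormedSpace 𝕜 E] [NormedAddCommGroup E'] [NormedSpace 𝕜 E']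
  [NormedAddCommGroup F] [NormedSpace 𝕜 F]
  [AddGroup G] [MeasurableSpace G] [MeasurableAdd₂ G] [MeasurableNeg G]
  {μ : Measure G} [SFinite μ] [μ.IsAddRightInvariant]
  (L : E →L[𝕜] E' →L[𝕜] F) {f : G → E} {k : G → E'} {C : ℝ}

theorem ae_norm_comp_sub_le (hC : ∀ᵐ t ∂μ, ‖k t‖ ≤ C) (x : G) :
    ∀ᵐ s ∂μ, ‖k (x - s)‖ ≤ C :=
  (quasiMeasurePreserving_sub_left_of_right_invariant μ x).ae hC

theorem convolutionExistsAt_of_ae_bound (hf : Integrable f μ) (hk : AEStronglyMeasurable k μ)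
    (hC : ∀ᵐ t ∂μ, ‖k t‖ ≤ C) (x : G) : ConvolutionExistsAt f k x L μ := by
  refine ((hf.norm.const_mul ‖L‖).mul_const C).mono'
    (hf.aestronglyMeasurable.convolution_integrand_snd L hk x) ?_
  filter_upwards [ae_norm_comp_sub_le hC x] with s hs
  exact L.le_of_opNorm₂_le_of_le le_rfl le_rfl hs

theorem norm_convolution_le_of_ae_bound [NormedSpace ℝ F] (hf : Integrable f μ)
    (hC : ∀ᵐ t ∂μ, ‖k t‖ ≤ C) (x : G) : ‖(f ⋆[L, μ] k) x‖ ≤ ‖L‖ * (∫ t, ‖f t‖ ∂μ) * C := by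
  rw [← integral_const_mul, ← integral_mul_const]
  refine norm_integral_le_of_norm_le ((hf.norm.const_mul ‖L‖).mul_const C) ?_
  filter_upwards [ae_norm_comp_sub_le hC x] with s hs
  exact L.le_of_opNorm₂_le_of_le le_rfl le_rfl hs

theorem aestronglyMeasurable_convolution [NormedSpace ℝ F] (hf : AEStronglyMeasurable f μ)
    (hk : AEStronglyMeasurable k μ) : AEStronglyMeasurable (f ⋆[L, μ] k) μ :=
  (hf.convolution_integrand L hk).integral_prod_right'

end AeBounded

theorem convolution_mul_comm (f g : ℝ → ℂ) : f ⋆[mul ℂ ℂ] g = g ⋆[mul ℂ ℂ] f := by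
  rw [← convolution_flip, flip_mul]

section ScalarConvolution

variable {φ ψ : ℝ → X} {f g : ℝ → ℂ}

omit [CompleteSpace X] in
theorem scConv_eq_convolution (g : ℝ → ℂ) (φ : ℝ → X) : scConv g φ = g ⋆[lsmul ℂ ℂ] φ := by
  ext t
  simp [scConv, convolution_def]

omit [CompleteSpace X] in
theorem EssBdd.integrable_smul_comp_sub (hφ : EssBdd φ) (hg : Integrable g) (t : ℝ) :
    Integrable fun s => g s • φ (t - s) :=
  let ⟨hm, _, hC⟩ := hφ
  convolutionExistsAt_of_ae_bound (lsmul ℂ ℂ) hg hm hC t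

omit [CompleteSpace X] in
theorem EssBdd.scConv (hφ : EssBdd φ) (hf : Integrable f) : EssBdd (scConv f φ) := by
  obtain ⟨hm, C, hC⟩ := hφ
  rw [scConv_eq_convolution]
  exact ⟨aestronglyMeasurable_convolution _ hf.aestronglyMeasurable hm, _,
    ae_of_all _ (norm_convolution_le_of_ae_bound _ hf hC)⟩

omit [CompleteSpace X] in
theorem scConv_congr_ae (h : φ =ᵐ[volume] ψ) (g : ℝ → ℂ) : scConv g φ = scConv g ψ := by
  ext t
  refine integral_congr_ae ?_
  filter_upwards [(quasiMeasurePreserving_sub_left volume t).ae_eq_comp h] with s hs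
  simp only [Function.comp_apply] at hs
  rw [hs]

omit [CompleteSpace X] in
theorem scConv_sub (hφ : EssBdd φ) (hψ : EssBdd ψ) (hg : Integrable g) (t : ℝ) :
    scConv g (fun x => φ x - ψ x) t = scConv g φ t - scConv g ψ t := by
  simp only [scConv, smul_sub]
  exact integral_sub (hφ.integrable_smul_comp_sub hg t) (hψ.integrable_smul_comp_sub hg t)

theorem scConv_scConv (hφ : EssBdd φ) (hf : Integrable f) (hg : Integrable g) :
    scConv g (scConv f φ) = scConv (f ⋆[mul ℂ ℂ] g) φ := by
  obtain ⟨hm, C, hC⟩ := hφ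
  have hC' : ∀ᵐ t, ‖‖φ t‖‖ ≤ C := by simpa only [norm_norm] using hC
  ext t
  simp only [scConv_eq_convolution, convolution_mul_comm f g]
  refine (convolution_assoc (mul ℂ ℂ) (lsmul ℂ ℂ) (lsmul ℂ ℂ) (lsmul ℂ ℂ)
    (fun x y z => mul_smul x y z) hg.aestronglyMeasurable hf.aestronglyMeasurable hm
    (hg.ae_convolution_exists _ hf)
    (ae_of_all _ (convolutionExistsAt_of_ae_bound _ hf.norm hm.norm hC'))
    (convolutionExistsAt_of_ae_bound _ hg.norm
      (aestronglyMeasurable_convolution _ hf.norm.aestronglyMeasurable hm.norm)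
      (ae_of_all _ (norm_convolution_le_of_ae_bound _ hf.norm hC')) t)).symm

end ScalarConvolution

section FourierTransform

theorem FT_eq_fourier (h : ℝ → ℂ) (w : ℝ) : FT h w = 𝓕 h (w / (2 * π)) := by
  rw [Real.fourier_real_eq_integral_exp_smul]
  unfold FT
  congr 1
  funext v
  rw [smul_eq_mul, mul_comm]
  congr 2
  have hπ : (π : ℂ) ≠ 0 := Complex.ofReal_ne_zero.mpr Real.pi_ne_zero
  push_cast
  field_simp

theorem integrable_mul_exp {a : ℝ → ℂ} (ha : Integrable a) (w : ℝ) :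
    Integrable fun t => a t * Complex.exp (-(Complex.I * w * t)) := by
  refine ha.mul_bdd (c := 1) (by fun_prop) (ae_of_all _ fun t => ?_)
  rw [Complex.norm_exp]
  simp

theorem FT_sub {a b : ℝ → ℂ} (ha : Integrable a) (hb : Integrable b) (w : ℝ) :
    FT (fun t => a t - b t) w = FT a w - FT b w := by
  simp only [FT, sub_mul]
  exact integral_sub (integrable_mul_exp ha w) (integrable_mul_exp hb w)

theorem FT_convolution {f g : ℝ → ℂ} (hf : Integrable f) (hg : Integrable g) (w : ℝ) :
    FT (f ⋆[mul ℂ ℂ] g) w = FT f w * FT g w := by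
  simp only [FT_eq_fourier, Real.fourier_mul_convolution_eq hf hg]

theorem eq_zero_of_FT_eq_zero {h : ℝ → ℂ} (hc : Continuous h) (hi : Integrable h)
    (h0 : ∀ w, FT h w = 0) : h = 0 := by
  have hF : 𝓕 h = 0 := by
    ext ξ
    simpa [FT_eq_fourier, Real.pi_ne_zero] using h0 (2 * π * ξ)
  have := hc.fourierInv_fourier_eq hi (by rw [hF]; exact integrable_zero _ _ _)
  have hinv : 𝓕⁻ (0 : ℝ → ℂ) = 0 := by
    ext x
    simp [Real.fourierInv_eq]
  rw [hF, hinv] at this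
  exact this.symm

theorem convolution_eq_self_of_FT {f g : ℝ → ℂ} (hf : Integrable f) (hg : Integrable g)
    (hgc : Continuous g) (hgb : BddAbove (Set.range fun x => ‖g x‖))
    (hfg : ∀ w, FT g w ≠ 0 → FT f w = 1) : f ⋆[mul ℂ ℂ] g = g := by
  have hi : Integrable (f ⋆[mul ℂ ℂ] g) := hf.integrable_convolution _ hg
  have hc : Continuous (f ⋆[mul ℂ ℂ] g) :=
    hgb.continuous_convolution_right_of_integrable _ hf hgc
  refine sub_eq_zero.mp (eq_zero_of_FT_eq_zero (hc.sub hgc) (hi.sub hg) fun w => ?_)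
  rw [Pi.sub_def, FT_sub hi hg, FT_convolution hf hg]
  by_cases hw : FT g w = 0
  · simp [hw]
  · simp [hfg w hw]

theorem exists_schwartz_FT_eq_one_of_mem_nhds {U : Set ℝ} {ω : ℝ} (hU : U ∈ 𝓝 ω) :
    ∃ g : 𝓢(ℝ, ℂ), FT g ω = 1 ∧ ∀ w, FT g w ≠ 0 → w ∈ U := by
  obtain ⟨ε, hε, hball⟩ := Metric.mem_nhds_iff.mp hU
  let bump : ContDiffBump ω := ⟨ε / 2, ε, half_pos hε, half_lt_self hε⟩
  have h2π : 2 * π ≠ 0 := by positivity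
  let ψ : ℝ → ℂ := fun ξ => (bump ((2 * π) • ξ) : ℂ)
  have hψ : HasCompactSupport ψ :=
    (bump.hasCompactSupport.comp_left Complex.ofReal_zero).comp_smul h2π
  have hψ' : ContDiff ℝ ((⊤ : ℕ∞) : WithTop ℕ∞) ψ :=
    (Complex.ofRealCLM.contDiff.comp bump.contDiff).comp (contDiff_const_smul _)
  let g : 𝓢(ℝ, ℂ) := 𝓕⁻ (hψ.toSchwartzMap hψ')
  have hFT : ∀ w, FT g w = bump w := fun w => by
    rw [FT_eq_fourier, ← SchwartzMap.fourier_coe, FourierTransform.fourier_fourierInv_eq]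
    simp [ψ, smul_eq_mul, mul_div_cancel₀ _ h2π]
  refine ⟨g, ?_, fun w hw => hball ?_⟩
  · simp [hFT, bump.one_of_mem_closedBall (Metric.mem_closedBall_self bump.rIn_pos.le)]
  · have hw' : w ∈ Function.support bump := fun h => hw (by simp [hFT, h])
    rwa [bump.support_eq] at hw'

end FourierTransform

section BeurlingSpectrum

variable {φ : ℝ → X} {f : ℝ → ℂ}

theorem BSpec_sub_scConv_subset (hφ : EssBdd φ) (hf : Integrable f) :
    BSpec (fun t => φ t - scConv f φ t) ⊆ BSpec φ := by
  intro ω hω g hg hgφ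
  refine hω g hg ?_
  have hgfφ : scConv g (scConv f φ) = 0 := by
    rw [scConv_scConv hφ hf hg, convolution_mul_comm, ← scConv_scConv hφ hg hf,
      scConv_congr_ae hgφ]
    ext t
    simp [scConv]
  filter_upwards [hgφ] with t ht
  rw [scConv_sub hφ (hφ.scConv hf) hg, ht, hgfφ, Pi.zero_apply, sub_zero]

theorem notMem_interior_of_mem_BSpec_sub_scConv (hφ : EssBdd φ) (hf : Integrable f) {ω : ℝ}
    (hω : ω ∈ BSpec (fun t => φ t - scConv f φ t)) : ω ∉ interior {w | FT f w = 1} := by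
  intro hint
  obtain ⟨g, hgω, hgf⟩ :=
    exists_schwartz_FT_eq_one_of_mem_nhds (mem_interior_iff_mem_nhds.mp hint)
  have hfg : f ⋆[mul ℂ ℂ] g = g := convolution_eq_self_of_FT hf g.integrable g.continuous
    ⟨_, Set.forall_mem_range.mpr (SchwartzMap.norm_le_seminorm ℝ g)⟩ hgf
  have hzero : ∀ t, scConv g (fun t => φ t - scConv f φ t) t = 0 := fun t => by
    rw [scConv_sub hφ (hφ.scConv hf) g.integrable, scConv_scConv hφ hf g.integrable, hfg,
      sub_self]
  simpa [hgω] using hω g g.integrable (ae_of_all _ hzero)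

end BeurlingSpectrum

theorem spec_sub_conv_subset (φ : ℝ → X) (hφ : EssBdd φ)
    (f : ℝ → ℂ) (hf : Integrable f) :
    BSpec (fun t => φ t - scConv f φ t) ⊆
      BSpec φ \ interior {ω : ℝ | FT f ω = 1} :=
  fun _ hω =>
    ⟨BSpec_sub_scConv_subset hφ hf hω, notMem_interior_of_mem_BSpec_sub_scConv hφ hf hω⟩

end
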